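/- (Generalized Stone–Weierstraß, algebraic version) Let I be a Riesz ideal of C(X, ℝ) and B a strictly point-separating and nowhere-vanishing linear subspace of I ∩ C_b(X) that is a subalgebra of C_b(X). Then the I-closure of B is all of I. -/
import Mathlib

variable {X : Type*} [TopologicalSpace X]

def IsRieszIdeal (I : Set C(X, ℝ)) : Prop :=
  (0 : C(X, ℝ)) ∈ I ∧ (∀ f g : C(X, ℝ), f ∈ I → g ∈ I → f + g ∈ I) ∧
    (∀ (c : ℝ) (f : C(X, ℝ)), f ∈ I → c • f ∈ I) ∧
    (∀ f g : C(X, ℝ), g ∈ I → (∀ x, |f x| ≤ |g x|) → f ∈ I)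

/-- A decreasing sequence of continuous functions with pointwise infimum `0`. -/
def DecrPtwInfZero (f : ℕ → C(X, ℝ)) : Prop :=
  (∀ k, f (k + 1) ≤ f k) ∧ ∀ x, IsGLB (Set.range fun k => f k x) 0

/-- The sequence `g` is strictly `I`-convergent to `g'`. -/
def StrictConvTo (I : Set C(X, ℝ)) (g : ℕ → C(X, ℝ)) (g' : C(X, ℝ)) : Prop :=
  ∃ f : ℕ → C(X, ℝ), (∀ k, f k ∈ I) ∧ DecrPtwInfZero f ∧
    ∀ k, ∃ N, ∀ n ≥ N, ∀ x, |g' x - g n x| ≤ f k x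

/-- The sequence `g` is a strict `I`-Cauchy sequence. -/
def StrictCauchy (I : Set C(X, ℝ)) (g : ℕ → C(X, ℝ)) : Prop :=
  ∃ f : ℕ → C(X, ℝ), (∀ k, f k ∈ I) ∧ DecrPtwInfZero f ∧
    ∀ k, ∃ N, ∀ n ≥ N, ∀ x, |g n x - g N x| ≤ f k x

def IClosed (I : Set C(X, ℝ)) (S : Set C(X, ℝ)) : Prop :=
  ∀ (g : ℕ → C(X, ℝ)) (g' : C(X, ℝ)), (∀ n, g n ∈ S) → StrictConvTo I g g' → g' ∈ S

def IClosure (I : Set C(X, ℝ)) (S : Set C(X, ℝ)) : Set C(X, ℝ) :=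
  ⋂₀ {C | C ⊆ I ∧ S ⊆ C ∧ IClosed I C}

open Set Filter Topology Polynomial

/-! ### Auxiliary lemmas -/

private lemma sw_isGLB_tendsto {a : ℕ → ℝ} (h0 : ∀ k, 0 ≤ a k)
    (ht : Tendsto a atTop (nhds 0)) : IsGLB (Set.range fun k => a k) 0 := by
  constructor
  · rintro _ ⟨k, rfl⟩; exact h0 k
  · intro b hb
    exact ge_of_tendsto' ht fun k => hb ⟨k, rfl⟩

private lemma sw_isGLB_attained {a : ℕ → ℝ} (h0 : ∀ k, 0 ≤ a k) (ha : ∃ k, a k = 0) :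
    IsGLB (Set.range fun k => a k) 0 := by
  obtain ⟨k0, hk0⟩ := ha
  exact ⟨by rintro _ ⟨k, rfl⟩; exact h0 k, fun b hb => hk0 ▸ hb ⟨k0, rfl⟩⟩

private lemma sw_pow_half_anti {m n : ℕ} (h : m ≤ n) : ((1:ℝ)/2) ^ n ≤ (1/2) ^ m :=
  pow_le_pow_of_le_one (by norm_num) (by norm_num) h

/-- `C` is closed under weighted uniform limits with weight in `I`. -/
private lemma sw_wlim {I C : Set C(X, ℝ)}
    (hsm : ∀ (c : ℝ) (f : C(X, ℝ)), f ∈ I → c • f ∈ I)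
    (hCcl : IClosed I C) (w : C(X, ℝ)) (hw : w ∈ I) (hw0 : ∀ x, 0 ≤ w x)
    (F : C(X, ℝ)) (β : ℕ → C(X, ℝ)) (hβ : ∀ j, β j ∈ C)
    (happ : ∀ j x, |F x - β j x| ≤ (1/2 : ℝ) ^ j * w x) : F ∈ C := by
  apply hCcl β F hβ
  refine ⟨fun k => ((1/2 : ℝ) ^ k) • w, fun k => hsm _ _ hw, ⟨?_, ?_⟩, ?_⟩
  · intro k
    rw [ContinuousMap.le_def]
    intro x
    simp only [ContinuousMap.smul_apply, smul_eq_mul]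
    exact mul_le_mul_of_nonneg_right (sw_pow_half_anti (Nat.le_succ k)) (hw0 x)
  · intro x
    simp only [ContinuousMap.smul_apply, smul_eq_mul]
    apply sw_isGLB_tendsto
    · intro k; exact mul_nonneg (by positivity) (hw0 x)
    · have h1 : Tendsto (fun k : ℕ => ((1:ℝ)/2) ^ k) atTop (nhds 0) :=
        tendsto_pow_atTop_nhds_zero_of_lt_one (by norm_num) (by norm_num)
      simpa using h1.mul_const (w x)
  · intro k
    refine ⟨k, fun n hn x => ?_⟩
    simp only [ContinuousMap.smul_apply, smul_eq_mul]
    exact (happ n x).trans (mul_le_mul_of_nonneg_right (sw_pow_half_anti hn) (hw0 x))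

/-! ### Membership of polynomial expressions in `B` -/

private lemma sw_polyeval_mem {B : Set C(X, ℝ)}
    (hadd : ∀ f g : C(X, ℝ), f ∈ B → g ∈ B → f + g ∈ B)
    (hsmul : ∀ (c : ℝ) (f : C(X, ℝ)), f ∈ B → c • f ∈ B)
    (hmul : ∀ f g : C(X, ℝ), f ∈ B → g ∈ B → f * g ∈ B)
    {v : C(X, ℝ)} (hv : v ∈ B) (R : Polynomial ℝ) :
    ∀ G : C(X, ℝ), (∀ x, G x = v x * R.eval (v x)) → G ∈ B := by
  have hpow : ∀ n : ℕ, v ^ (n + 1) ∈ B := by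
    intro n; induction n with
    | zero => simpa using hv
    | succ n ih => rw [pow_succ]; exact hmul _ _ ih hv
  induction R using Polynomial.induction_on' with
  | add p q ihp ihq =>
    intro G hG
    have h1 : G = (⟨fun x => v x * p.eval (v x), v.continuous.mul
        ((p.continuous).comp v.continuous)⟩ : C(X, ℝ)) +
        ⟨fun x => v x * q.eval (v x), v.continuous.mul ((q.continuous).comp v.continuous)⟩ := by
      ext x
      simp only [ContinuousMap.add_apply, ContinuousMap.coe_mk, hG x, Polynomial.eval_add]
      ring
    rw [h1]
    exact hadd _ _ (ihp _ fun _ => rfl) (ihq _ fun _ => rfl)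
  | monomial n a =>
    intro G hG
    have h1 : G = a • v ^ (n + 1) := by
      ext x
      simp only [hG x, ContinuousMap.smul_apply, ContinuousMap.pow_apply, ContinuousMap.mul_apply,
        smul_eq_mul, Polynomial.eval_monomial, pow_succ]
      ring
    rw [h1]
    exact hsmul _ _ (hpow n)

private lemma sw_approx_mem {B : Set C(X, ℝ)}
    (hadd : ∀ f g : C(X, ℝ), f ∈ B → g ∈ B → f + g ∈ B)
    (hsmul : ∀ (c : ℝ) (f : C(X, ℝ)), f ∈ B → c • f ∈ B)
    (hmul : ∀ f g : C(X, ℝ), f ∈ B → g ∈ B → f * g ∈ B)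
    {b e : C(X, ℝ)} (hb : b ∈ B) (he : e ∈ B) (P Q : Polynomial ℝ) (c : ℝ) :
    ∀ G : C(X, ℝ), (∀ x, G x = P.eval (c + b x) * (e x * Q.eval (e x))) → G ∈ B := by
  intro G hG
  set P' : Polynomial ℝ := P.comp (Polynomial.C c + Polynomial.X) with hP'
  have hev : ∀ t : ℝ, P.eval (c + t) = P'.eval t := by
    intro t; simp [hP', Polynomial.eval_comp]
  have hkey : ∀ t : ℝ, P'.eval t = P'.coeff 0 + t * P'.divX.eval t := by
    intro t
    conv_lhs => rw [← Polynomial.X_mul_divX_add P']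
    simp only [Polynomial.eval_add, Polynomial.eval_mul, Polynomial.eval_X, Polynomial.eval_C]
    ring
  set q1 : C(X, ℝ) := ⟨fun x => e x * Q.eval (e x), e.continuous.mul
      ((Q.continuous).comp e.continuous)⟩ with hq1
  set r1 : C(X, ℝ) := ⟨fun x => b x * P'.divX.eval (b x), b.continuous.mul
      ((P'.divX.continuous).comp b.continuous)⟩ with hr1
  have hQ : q1 ∈ B := sw_polyeval_mem hadd hsmul hmul he Q _ fun _ => rfl
  have hR : r1 ∈ B := sw_polyeval_mem hadd hsmul hmul hb P'.divX _ fun _ => rfl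
  have h1 : G = (P'.coeff 0) • q1 + r1 * q1 := by
    ext x
    simp only [hq1, hr1, hG x, ContinuousMap.add_apply, ContinuousMap.smul_apply,
      ContinuousMap.mul_apply, ContinuousMap.coe_mk, smul_eq_mul, hev (b x), hkey (b x)]
    ring
  rw [h1]
  exact hadd _ _ (hsmul _ _ hQ) (hmul _ _ hR hQ)

/-! ### Weierstrass approximation -/

private lemma sw_poly_approx (f : ℝ → ℝ) (hf : Continuous f) (lo hi ε : ℝ) (hε : 0 < ε) :
    ∃ P : Polynomial ℝ, ∀ t ∈ Set.Icc lo hi, |f t - P.eval t| ≤ ε := by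
  set F : C(Set.Icc lo hi, ℝ) := ⟨fun t => f t, hf.comp continuous_subtype_val⟩ with hF
  have hdense := polynomialFunctions_closure_eq_top lo hi
  have hFcl : F ∈ closure ((polynomialFunctions (Set.Icc lo hi)) : Set C(Set.Icc lo hi, ℝ)) := by
    rw [← Subalgebra.topologicalClosure_coe, hdense]
    simp
  obtain ⟨p, hpmem, hpd⟩ := Metric.mem_closure_iff.mp hFcl ε hε
  rw [polynomialFunctions_coe] at hpmem
  obtain ⟨q, rfl⟩ := hpmem
  refine ⟨q, fun t ht => ?_⟩
  have h1 : dist (F ⟨t, ht⟩) ((Polynomial.toContinuousMapOnAlgHom (Set.Icc lo hi) q) ⟨t, ht⟩) ≤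
      dist F (Polynomial.toContinuousMapOnAlgHom (Set.Icc lo hi) q) :=
    ContinuousMap.dist_apply_le_dist _
  have h2 : F ⟨t, ht⟩ = f t := rfl
  have h3 : (Polynomial.toContinuousMapOnAlgHom (Set.Icc lo hi) q) ⟨t, ht⟩ = q.eval t := rfl
  rw [h2, h3, Real.dist_eq] at h1
  exact h1.trans (le_of_lt hpd)

/-! ### Stone–Weierstrass on a compact subset -/

private lemma sw_compactSW {B : Set C(X, ℝ)}
    (hzero : (0 : C(X, ℝ)) ∈ B)
    (hadd : ∀ f g : C(X, ℝ), f ∈ B → g ∈ B → f + g ∈ B)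
    (hsmul : ∀ (c : ℝ) (f : C(X, ℝ)), f ∈ B → c • f ∈ B)
    (hmul : ∀ f g : C(X, ℝ), f ∈ B → g ∈ B → f * g ∈ B)
    (hsep : ∀ x y : X, x ≠ y → ∃ s ∈ B, s x ≠ 0 ∧ s y = 0)
    (K : Set X) (hK : IsCompact K) (h : C(X, ℝ)) (δ : ℝ) (hδ : 0 < δ) :
    ∃ (c : ℝ) (bb : C(X, ℝ)), bb ∈ B ∧ ∀ x ∈ K, |h x - (c + bb x)| ≤ δ := by
  haveI : CompactSpace K := isCompact_iff_compactSpace.mp hK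
  set ι : C(K, X) := ⟨Subtype.val, continuous_subtype_val⟩ with hι
  set ρ : C(X, ℝ) → C(K, ℝ) := fun f => f.comp ι with hρ
  set A : Subalgebra ℝ C(K, ℝ) := Algebra.adjoin ℝ (ρ '' B) with hA
  have hsepA : A.SeparatesPoints := by
    rintro ⟨x, hx⟩ ⟨y, hy⟩ hxy
    have hxy' : x ≠ y := fun hh => hxy (Subtype.ext hh)
    obtain ⟨s, hsB, hsx, hsy⟩ := hsep x y hxy'
    refine ⟨(fun f : C(K, ℝ) => (f : K → ℝ)) (ρ s), ⟨ρ s,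
      Algebra.subset_adjoin ⟨s, hsB, rfl⟩, rfl⟩, ?_⟩
    show s x ≠ s y
    rw [hsy]; exact hsx
  have htop := ContinuousMap.subalgebra_topologicalClosure_eq_top_of_separatesPoints A hsepA
  have hcl : ρ h ∈ closure (A : Set C(K, ℝ)) := by
    rw [← Subalgebra.topologicalClosure_coe, htop]
    simp
  have hdec : ∀ p ∈ A, ∃ (c : ℝ) (bb : C(X, ℝ)), bb ∈ B ∧ ∀ y : K, p y = c + bb y := by
    intro p hp
    induction hp using Algebra.adjoin_induction with
    | mem s hs =>
      obtain ⟨bb, hbb, rfl⟩ := hs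
      exact ⟨0, bb, hbb, fun y => by rw [zero_add]; rfl⟩
    | algebraMap r =>
      refine ⟨r, 0, hzero, fun y => ?_⟩
      simp
    | add p q hp hq ihp ihq =>
      obtain ⟨c1, b1, hb1, e1⟩ := ihp
      obtain ⟨c2, b2, hb2, e2⟩ := ihq
      refine ⟨c1 + c2, b1 + b2, hadd _ _ hb1 hb2, fun y => ?_⟩
      simp [e1 y, e2 y]; ring
    | mul p q hp hq ihp ihq =>
      obtain ⟨c1, b1, hb1, e1⟩ := ihp
      obtain ⟨c2, b2, hb2, e2⟩ := ihq
      refine ⟨c1 * c2, c1 • b2 + c2 • b1 + b1 * b2,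
        hadd _ _ (hadd _ _ (hsmul _ _ hb2) (hsmul _ _ hb1)) (hmul _ _ hb1 hb2), fun y => ?_⟩
      simp [e1 y, e2 y]; ring
  obtain ⟨p, hpA, hpd⟩ := Metric.mem_closure_iff.mp hcl δ hδ
  obtain ⟨c, bb, hbb, heq⟩ := hdec p hpA
  refine ⟨c, bb, hbb, fun x hx => ?_⟩
  have h1 : dist (ρ h ⟨x, hx⟩) (p ⟨x, hx⟩) ≤ dist (ρ h) p := ContinuousMap.dist_apply_le_dist _
  rw [heq ⟨x, hx⟩] at h1
  have h2 : ρ h ⟨x, hx⟩ = h x := rfl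
  rw [h2, Real.dist_eq] at h1
  show |h x - (c + bb x)| ≤ δ
  have : bb (⟨x, hx⟩ : K) = bb x := rfl
  rw [this] at h1
  exact h1.trans (le_of_lt hpd)

/-! ### Real-valued helper functions -/

private lemma sw_psi_nonneg (t : ℝ) : 0 ≤ min (max (2*t - 1) 0) 1 :=
  le_min (le_max_right _ 0) zero_le_one

private lemma sw_psi_le_one (t : ℝ) : min (max (2*t - 1) 0) 1 ≤ 1 := min_le_right _ _

private lemma sw_psi_zero {t : ℝ} (ht : t ≤ 1/2) : min (max (2*t - 1) 0) 1 = 0 := by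
  have h1 : max (2*t - 1) 0 = 0 := max_eq_right (by linarith)
  rw [h1]
  exact min_eq_left zero_le_one

private lemma sw_psi_one {t : ℝ} (ht : 1 ≤ t) : min (max (2*t - 1) 0) 1 = 1 := by
  have h1 : (1:ℝ) ≤ max (2*t - 1) 0 := le_max_of_le_left (by linarith)
  exact min_eq_right h1

private lemma sw_psi_mono {a b : ℝ} (hab : a ≤ b) :
    min (max (2*a - 1) 0) 1 ≤ min (max (2*b - 1) 0) 1 := by
  apply min_le_min _ le_rfl
  apply max_le_max _ le_rfl
  linarith

private lemma sw_Psi_cont : Continuous fun t : ℝ => min (4*t) (max t (1/2))⁻¹ := by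
  apply Continuous.min (by continuity)
  apply Continuous.inv₀ (continuous_id.max continuous_const)
  intro t
  exact ne_of_gt (lt_of_lt_of_le (by norm_num : (0:ℝ) < 1/2) (le_max_right _ _))

private lemma sw_Psi_nonneg {t : ℝ} (ht : 0 ≤ t) : 0 ≤ min (4*t) (max t (1/2))⁻¹ := by
  apply le_min (by linarith)
  have : (0:ℝ) < max t (1/2) := lt_of_lt_of_le (by norm_num) (le_max_right _ _)
  positivity

private lemma sw_u_nonneg {t : ℝ} (ht : 0 ≤ t) : 0 ≤ t * min (4*t) (max t (1/2))⁻¹ :=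
  mul_nonneg ht (sw_Psi_nonneg ht)

private lemma sw_u_le_one {t : ℝ} (ht : 0 ≤ t) : t * min (4*t) (max t (1/2))⁻¹ ≤ 1 := by
  rcases le_total t (1/2) with h | h
  · calc t * min (4*t) (max t (1/2))⁻¹ ≤ t * (4*t) :=
        mul_le_mul_of_nonneg_left (min_le_left _ _) ht
      _ ≤ 1 := by nlinarith
  · have ht0 : (0:ℝ) < t := by linarith
    calc t * min (4*t) (max t (1/2))⁻¹ ≤ t * (max t (1/2))⁻¹ :=
        mul_le_mul_of_nonneg_left (min_le_right _ _) ht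
      _ = t * t⁻¹ := by rw [max_eq_left h]
      _ ≤ 1 := by rw [mul_inv_cancel₀ (ne_of_gt ht0)]

private lemma sw_u_le_two {t : ℝ} (ht : 0 ≤ t) : t * min (4*t) (max t (1/2))⁻¹ ≤ 2 * t := by
  have hPsi : min (4*t) (max t (1/2))⁻¹ ≤ 2 := by
    rcases le_total t (1/2) with h | h
    · exact (min_le_left _ _).trans (by linarith)
    · refine (min_le_right _ _).trans ?_
      rw [max_eq_left h, show (2:ℝ) = (1/2)⁻¹ by norm_num]
      exact inv_anti₀ (by norm_num) h
  calc t * min (4*t) (max t (1/2))⁻¹ ≤ t * 2 := mul_le_mul_of_nonneg_left hPsi ht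
    _ = 2 * t := by ring

private lemma sw_u_one {t : ℝ} (ht : 1/2 ≤ t) : t * min (4*t) (max t (1/2))⁻¹ = 1 := by
  have ht0 : (0:ℝ) < t := by linarith
  rw [max_eq_left ht]
  have h1 : min (4*t) t⁻¹ = t⁻¹ := by
    apply min_eq_right
    rw [inv_eq_one_div, div_le_iff₀ ht0]
    nlinarith
  rw [h1, mul_inv_cancel₀ (ne_of_gt ht0)]

private lemma sw_clamp_abs {L t : ℝ} (hL : 0 ≤ L) : |max (min t L) (-L)| ≤ L := by
  rw [abs_le]
  exact ⟨le_max_right _ _, max_le (min_le_right _ _) (by linarith)⟩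

private lemma sw_clamp_abs_le_abs {L t : ℝ} (hL : 0 ≤ L) : |max (min t L) (-L)| ≤ |t| := by
  rw [abs_le]
  constructor
  · apply le_max_of_le_left
    exact le_min (neg_abs_le t) (le_trans (neg_nonpos_of_nonneg (abs_nonneg t)) hL)
  · exact max_le ((min_le_left _ _).trans (le_abs_self t))
      (le_trans (neg_nonpos_of_nonneg hL) (abs_nonneg t))

private lemma sw_clamp_eq {L t : ℝ} (ht : |t| ≤ L) : max (min t L) (-L) = t := by
  rw [abs_le] at ht
  rw [min_eq_left ht.2, max_eq_left ht.1]

private lemma sw_clamp_dist {L t : ℝ} (hL : 0 ≤ L) :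
    |t - max (min t L) (-L)| ≤ max (|t| - L) 0 := by
  rcases le_total t L with h1 | h1
  · rcases le_total (-L) t with h2 | h2
    · have : max (min t L) (-L) = t := by rw [min_eq_left h1, max_eq_left h2]
      rw [this, sub_self, abs_zero]
      exact le_max_right _ _
    · have hmin : min t L = t := min_eq_left h1
      rw [hmin, max_eq_right h2]
      have habs : |t| = -t := abs_of_nonpos (by linarith)
      rw [show t - -L = -(-t - L) from by ring, abs_neg, abs_of_nonneg (by linarith)]
      rw [habs]
      exact le_max_left _ _
  · have : max (min t L) (-L) = L := by rw [min_eq_right h1, max_eq_left (by linarith)]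
    rw [this, abs_of_nonneg (by linarith)]
    have : |t| = t := abs_of_nonneg (by linarith)
    rw [this]
    exact le_max_left _ _

/-! ### The key membership lemma -/

private lemma sw_key {I B C : Set C(X, ℝ)}
    (hBI : B ⊆ I) (hBb : ∀ f ∈ B, ∃ M : ℝ, ∀ x, |f x| ≤ M)
    (hadd : ∀ f g : C(X, ℝ), f ∈ B → g ∈ B → f + g ∈ B)
    (hsmul : ∀ (c : ℝ) (f : C(X, ℝ)), f ∈ B → c • f ∈ B)
    (hmul : ∀ f g : C(X, ℝ), f ∈ B → g ∈ B → f * g ∈ B)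
    (hsmI : ∀ (c : ℝ) (f : C(X, ℝ)), f ∈ I → c • f ∈ I)
    (hBC : B ⊆ C) (hCcl : IClosed I C)
    (b e : C(X, ℝ)) (hb : b ∈ B) (he : e ∈ B) (he0 : ∀ x, 0 ≤ e x) (c : ℝ)
    (T Ψ : ℝ → ℝ) (hT : Continuous T) (hΨ : Continuous Ψ)
    (F : C(X, ℝ)) (hF : ∀ x, F x = T (c + b x) * (e x * Ψ (e x))) : F ∈ C := by
  obtain ⟨Mb, hMb⟩ := hBb b hb
  obtain ⟨Me, hMe⟩ := hBb e he
  obtain ⟨CT, hCT⟩ := (isCompact_Icc (a := -(|c| + Mb))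
    (b := |c| + Mb)).exists_bound_of_continuousOn hT.continuousOn
  obtain ⟨CP, hCP⟩ := (isCompact_Icc (a := -Me)
    (b := Me)).exists_bound_of_continuousOn hΨ.continuousOn
  set D : ℝ := |CT| + |CP| + 2 with hD
  have hD0 : 0 < D := by positivity
  have happ : ∀ j : ℕ, ∃ βj : C(X, ℝ), βj ∈ B ∧
      ∀ x, |F x - βj x| ≤ (1/2 : ℝ)^j * e x := by
    intro j
    have hεpos : 0 < (1/2:ℝ)^j / D := by positivity
    obtain ⟨P, hP⟩ := sw_poly_approx T hT (-(|c| + Mb)) (|c| + Mb) _ hεpos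
    obtain ⟨Q, hQ⟩ := sw_poly_approx Ψ hΨ (-Me) Me _ hεpos
    set ε : ℝ := (1/2:ℝ)^j / D with hεdef
    refine ⟨⟨fun x => P.eval (c + b x) * (e x * Q.eval (e x)),
      ((P.continuous).comp (continuous_const.add b.continuous)).mul
        (e.continuous.mul ((Q.continuous).comp e.continuous))⟩,
      sw_approx_mem hadd hsmul hmul hb he P Q c _ fun _ => rfl, fun x => ?_⟩
    have hmemb : c + b x ∈ Set.Icc (-(|c| + Mb)) (|c| + Mb) := by
      have h1 : |c + b x| ≤ |c| + Mb := (abs_add_le _ _).trans (by linarith [hMb x])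
      exact abs_le.mp h1
    have hmeme : e x ∈ Set.Icc (-Me) Me := abs_le.mp (hMe x)
    have e1 : |T (c + b x) - P.eval (c + b x)| ≤ ε := hP _ hmemb
    have e2 : |Ψ (e x) - Q.eval (e x)| ≤ ε := hQ _ hmeme
    have e3 : |T (c + b x)| ≤ |CT| := by
      have := hCT _ hmemb
      rw [Real.norm_eq_abs] at this
      exact this.trans (le_abs_self CT)
    have e4 : |Q.eval (e x)| ≤ |CP| + 1 := by
      have h5 : |Ψ (e x)| ≤ |CP| := by
        have := hCP _ hmeme
        rw [Real.norm_eq_abs] at this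
        exact this.trans (le_abs_self CP)
      have h6 : ε ≤ 1 := by
        rw [hεdef, div_le_one hD0]
        calc (1/2:ℝ)^j ≤ 1 := pow_le_one₀ (by norm_num) (by norm_num)
          _ ≤ D := by rw [hD]; linarith [abs_nonneg CT, abs_nonneg CP]
      calc |Q.eval (e x)| = |Ψ (e x) - (Ψ (e x) - Q.eval (e x))| := by ring_nf
        _ ≤ |Ψ (e x)| + |Ψ (e x) - Q.eval (e x)| := abs_sub _ _
        _ ≤ |CP| + 1 := by linarith
    have hex : |e x| = e x := abs_of_nonneg (he0 x)
    have hid : T (c + b x) * (e x * Ψ (e x)) - P.eval (c + b x) * (e x * Q.eval (e x)) =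
        T (c + b x) * e x * (Ψ (e x) - Q.eval (e x)) +
          e x * Q.eval (e x) * (T (c + b x) - P.eval (c + b x)) := by ring
    have t1 : |T (c + b x) * e x * (Ψ (e x) - Q.eval (e x))| ≤ |CT| * e x * ε := by
      rw [abs_mul, abs_mul, hex]
      apply mul_le_mul _ e2 (abs_nonneg _) (mul_nonneg (abs_nonneg CT) (he0 x))
      exact mul_le_mul_of_nonneg_right e3 (he0 x)
    have t2 : |e x * Q.eval (e x) * (T (c + b x) - P.eval (c + b x))| ≤
        e x * (|CP| + 1) * ε := by
      rw [abs_mul, abs_mul, hex]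
      apply mul_le_mul _ e1 (abs_nonneg _)
        (mul_nonneg (he0 x) (by positivity))
      exact mul_le_mul_of_nonneg_left e4 (he0 x)
    have hDe : D * ε = (1/2:ℝ)^j := by
      rw [hεdef, mul_comm, div_mul_cancel₀ _ (ne_of_gt hD0)]
    calc |F x - P.eval (c + b x) * (e x * Q.eval (e x))|
        = |T (c + b x) * e x * (Ψ (e x) - Q.eval (e x)) +
            e x * Q.eval (e x) * (T (c + b x) - P.eval (c + b x))| := by rw [hF x, hid]
      _ ≤ |T (c + b x) * e x * (Ψ (e x) - Q.eval (e x))| +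
            |e x * Q.eval (e x) * (T (c + b x) - P.eval (c + b x))| := abs_add_le _ _
      _ ≤ |CT| * e x * ε + e x * (|CP| + 1) * ε := by linarith
      _ = ((|CT| + |CP| + 1) * ε) * e x := by ring
      _ ≤ (D * ε) * e x := by
          apply mul_le_mul_of_nonneg_right _ (he0 x)
          apply mul_le_mul_of_nonneg_right _ (le_of_lt hεpos)
          rw [hD]; linarith
      _ = (1/2:ℝ)^j * e x := by rw [hDe]
  choose β hβB hβ using happ
  exact sw_wlim hsmI hCcl e (hBI he) he0 F β (fun j => hBC (hβB j)) hβ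

/-! ### Named helper functions -/

private noncomputable def swPsi : ℝ → ℝ := fun t => min (max (2*t - 1) 0) 1

private noncomputable def swU : ℝ → ℝ := fun t => min (4*t) (max t (1/2))⁻¹

private noncomputable def swClamp (M : ℝ) : ℝ → ℝ := fun t => max (min t (M+1)) (-(M+1))

private lemma swPsi_cont : Continuous swPsi :=
  Continuous.min (Continuous.max (by continuity) continuous_const) continuous_const

private lemma swU_cont : Continuous swU := sw_Psi_cont

private lemma swClamp_cont (M : ℝ) : Continuous (swClamp M) :=
  Continuous.max (Continuous.min continuous_id continuous_const) continuous_const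

private lemma swPsi_nonneg (t : ℝ) : 0 ≤ swPsi t := sw_psi_nonneg t

private lemma swPsi_le_one (t : ℝ) : swPsi t ≤ 1 := sw_psi_le_one t

private lemma swPsi_zero {t : ℝ} (ht : t ≤ 1/2) : swPsi t = 0 := sw_psi_zero ht

private lemma swPsi_one {t : ℝ} (ht : 1 ≤ t) : swPsi t = 1 := sw_psi_one ht

private lemma swPsi_mono {a b : ℝ} (hab : a ≤ b) : swPsi a ≤ swPsi b := sw_psi_mono hab

private lemma swU_u_nonneg {t : ℝ} (ht : 0 ≤ t) : 0 ≤ t * swU t := sw_u_nonneg ht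

private lemma swU_u_le_one {t : ℝ} (ht : 0 ≤ t) : t * swU t ≤ 1 := sw_u_le_one ht

private lemma swU_u_le_two {t : ℝ} (ht : 0 ≤ t) : t * swU t ≤ 2 * t := sw_u_le_two ht

private lemma swU_u_one {t : ℝ} (ht : 1/2 ≤ t) : t * swU t = 1 := sw_u_one ht

private lemma swClamp_abs {M : ℝ} (hM : 0 ≤ M) (t : ℝ) : |swClamp M t| ≤ M + 1 :=
  sw_clamp_abs (by linarith)

private lemma swClamp_eq {M t : ℝ} (ht : |t| ≤ M + 1) : swClamp M t = t := sw_clamp_eq ht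

/-! ### The bounded case -/

private lemma sw_bounded_main {I B C : Set C(X, ℝ)}
    (hI : IsRieszIdeal I) (hBI : B ⊆ I)
    (hBb : ∀ f ∈ B, ∃ M : ℝ, ∀ x, |f x| ≤ M)
    (hzero : (0 : C(X, ℝ)) ∈ B)
    (hadd : ∀ f g : C(X, ℝ), f ∈ B → g ∈ B → f + g ∈ B)
    (hsmul : ∀ (c : ℝ) (f : C(X, ℝ)), f ∈ B → c • f ∈ B)
    (hmul : ∀ f g : C(X, ℝ), f ∈ B → g ∈ B → f * g ∈ B)
    (hsep : ∀ x y : X, x ≠ y → ∃ s ∈ B, s x ≠ 0 ∧ s y = 0)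
    (hBC : B ⊆ C) (hCcl : IClosed I C)
    (σ : ℕ → C(X, ℝ)) (hσB : ∀ i, σ i ∈ B) (hσ0 : ∀ i x, 0 ≤ σ i x)
    (hσcov : ∀ x, ∃ i, 1 < σ i x)
    (K : ℕ → Set X) (hKc : ∀ n, IsCompact (K n))
    (hKmono : ∀ m n, m ≤ n → K m ⊆ K n) (hKcov : ∀ x, ∃ n, x ∈ K n)
    (Θ : ℕ → C(X, ℝ)) (hΘ0 : ∀ k x, 0 ≤ Θ k x) (hΘ1 : ∀ k x, Θ k x ≤ 1)
    (hΘdec : ∀ k x, Θ (k+1) x ≤ Θ k x)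
    (hΘone : ∀ k x, x ∉ K (k+1) → Θ k x = 1)
    (hΘzero : ∀ k x, x ∈ K k → Θ k x = 0)
    (g : C(X, ℝ)) (hg : g ∈ I) (M : ℝ) (hM0 : 0 ≤ M) (hM : ∀ x, |g x| ≤ M) :
    g ∈ C := by
  classical
  -- the increasing sequence of sums `e m`
  set e : ℕ → C(X, ℝ) := fun m => Nat.rec 0 (fun i prev => prev + σ i) m with he
  have heS : ∀ m x, e (m+1) x = e m x + σ m x := fun m x => rfl
  have heB : ∀ m, e m ∈ B := by
    intro m; induction m with
    | zero => exact hzero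
    | succ m ih => exact hadd _ _ ih (hσB m)
  have he0 : ∀ m x, 0 ≤ e m x := by
    intro m; induction m with
    | zero => intro x; rfl
    | succ m ih => intro x; rw [heS]; exact add_nonneg (ih x) (hσ0 m x)
  have hemono : ∀ m n, m ≤ n → ∀ x, e m x ≤ e n x := by
    intro m n hmn x
    induction n, hmn using Nat.le_induction with
    | base => exact le_rfl
    | succ n hmn ih => rw [heS]; linarith [hσ0 n x]
  have hecov : ∀ x, ∃ m, 1 < e m x := by
    intro x
    obtain ⟨i, hi⟩ := hσcov x
    exact ⟨i + 1, by rw [heS]; linarith [he0 i x]⟩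
  -- Step: each `g · ψ(e m)` is in `C`.
  have hstep : ∀ m (h : C(X, ℝ)), (∀ x, h x = g x * swPsi (e m x)) → h ∈ C := by
    intro m h hh
    have hap : ∀ n : ℕ, ∃ (c : ℝ) (bb : C(X, ℝ)), bb ∈ B ∧
        ∀ x ∈ K n, |h x - (c + bb x)| ≤ (1/2 : ℝ)^n :=
      fun n => sw_compactSW hzero hadd hsmul hmul hsep (K n) (hKc n) h _ (by positivity)
    choose cc bb hbbB hbb using hap
    set W : ℕ → C(X, ℝ) := fun n =>
      ⟨fun x => swClamp M (cc n + bb n x) * (e m x * swU (e m x)),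
        ((swClamp_cont M).comp (continuous_const.add (bb n).continuous)).mul
          ((e m).continuous.mul (swU_cont.comp (e m).continuous))⟩ with hWdef
    have hWC : ∀ n, W n ∈ C := fun n =>
      sw_key hBI hBb hadd hsmul hmul hI.2.2.1 hBC hCcl (bb n) (e m) (hbbB n) (heB m)
        (he0 m) (cc n) (swClamp M) swU (swClamp_cont M) swU_cont (W n) (fun x => rfl)
    apply hCcl W h hWC
    refine ⟨fun k => ((1/2 : ℝ)^k * 2) • e m + ((2*M+1)*2) • (e m * Θ k), ?_, ⟨?_, ?_⟩, ?_⟩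
    · intro k
      apply hI.2.1
      · exact hI.2.2.1 _ _ (hBI (heB m))
      · apply hI.2.2.1
        apply hI.2.2.2 _ _ (hBI (heB m))
        intro x
        rw [ContinuousMap.mul_apply, abs_mul]
        apply mul_le_of_le_one_right (abs_nonneg _)
        rw [abs_of_nonneg (hΘ0 k x)]
        exact hΘ1 k x
    · intro k
      rw [ContinuousMap.le_def]
      intro x
      simp only [ContinuousMap.add_apply, ContinuousMap.smul_apply, ContinuousMap.mul_apply,
        smul_eq_mul]
      have h1 : ((1/2:ℝ)^(k+1) * 2) * e m x ≤ ((1/2:ℝ)^k * 2) * e m x :=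
        mul_le_mul_of_nonneg_right
          (mul_le_mul_of_nonneg_right (sw_pow_half_anti (Nat.le_succ k)) (by norm_num))
          (he0 m x)
      have h2 : ((2*M+1)*2) * (e m x * Θ (k+1) x) ≤ ((2*M+1)*2) * (e m x * Θ k x) :=
        mul_le_mul_of_nonneg_left
          (mul_le_mul_of_nonneg_left (hΘdec k x) (he0 m x)) (by linarith)
      linarith
    · intro x
      simp only [ContinuousMap.add_apply, ContinuousMap.smul_apply, ContinuousMap.mul_apply,
        smul_eq_mul]
      apply sw_isGLB_tendsto
      · intro k
        have hA := he0 m x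
        have hB := hΘ0 k x
        have h3 : (0:ℝ) ≤ (1/2:ℝ)^k * 2 := by positivity
        exact add_nonneg (mul_nonneg h3 hA)
          (mul_nonneg (by linarith) (mul_nonneg hA hB))
      · obtain ⟨n0, hn0⟩ := hKcov x
        have ht1 : Filter.Tendsto (fun k : ℕ => ((1/2:ℝ)^k * 2) * e m x)
            Filter.atTop (nhds 0) := by
          have h4 := (tendsto_pow_atTop_nhds_zero_of_lt_one
            (by norm_num : (0:ℝ) ≤ 1/2) (by norm_num)).mul_const (2 * e m x)
          simpa [mul_assoc] using h4
        have ht2 : Filter.Tendsto (fun k : ℕ => ((2*M+1)*2) * (e m x * Θ k x))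
            Filter.atTop (nhds 0) := by
          apply Filter.Tendsto.congr' _ tendsto_const_nhds
          filter_upwards [Filter.eventually_ge_atTop n0] with k hk
          rw [hΘzero k x (hKmono n0 k hk hn0), mul_zero, mul_zero]
        have h5 := ht1.add ht2
        simpa using h5
    · intro k
      refine ⟨k + 1, fun n hn x => ?_⟩
      simp only [ContinuousMap.add_apply, ContinuousMap.smul_apply, ContinuousMap.mul_apply,
        ContinuousMap.coe_mk, smul_eq_mul]
      have hWx : W n x = swClamp M (cc n + bb n x) * (e m x * swU (e m x)) := rfl
      set t : ℝ := e m x with htdef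
      have ht0 : 0 ≤ t := he0 m x
      have hu0 : 0 ≤ t * swU t := swU_u_nonneg ht0
      have hu2 : t * swU t ≤ 2 * t := swU_u_le_two ht0
      have hψ0 : 0 ≤ swPsi t := swPsi_nonneg t
      have hψ1 : swPsi t ≤ 1 := swPsi_le_one t
      have hzero1 : g x * swPsi t * (1 - t * swU t) = 0 := by
        rcases le_total t (1/2) with hc | hc
        · rw [swPsi_zero hc]; ring
        · rw [swU_u_one hc]; ring
      have hTb : |swClamp M (cc n + bb n x)| ≤ M + 1 := swClamp_abs hM0 _
      have hhx : |h x| ≤ M := by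
        rw [hh x, abs_mul]
        calc |g x| * |swPsi t| ≤ M * 1 :=
            mul_le_mul (hM x) (by rw [abs_of_nonneg hψ0]; exact hψ1) (abs_nonneg _) hM0
          _ = M := mul_one M
      have hsplit : h x - W n x =
          g x * swPsi t * (1 - t * swU t) +
            (h x - swClamp M (cc n + bb n x)) * (t * swU t) := by
        rw [hWx, hh x]; ring
      by_cases hxK : x ∈ K n
      · have he1 : |h x - (cc n + bb n x)| ≤ (1/2:ℝ)^n := hbb n x hxK
        have he2 : swClamp M (cc n + bb n x) = cc n + bb n x := by
          apply swClamp_eq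
          have h6 : |cc n + bb n x| ≤ |h x| + |h x - (cc n + bb n x)| := by
            calc |cc n + bb n x| = |h x - (h x - (cc n + bb n x))| := by ring_nf
              _ ≤ |h x| + |h x - (cc n + bb n x)| := abs_sub _ _
          have hpow1 : (1/2:ℝ)^n ≤ 1 := pow_le_one₀ (by norm_num) (by norm_num)
          linarith
        have hbound : |h x - W n x| ≤ (1/2:ℝ)^n * (2*t) := by
          rw [hsplit, hzero1, zero_add, abs_mul]
          apply mul_le_mul _ _ (abs_nonneg _) (by positivity)
          · rw [he2]; exact he1
          · rw [abs_of_nonneg hu0]; exact hu2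
        have h7 : (1/2:ℝ)^n * (2*t) ≤ (1/2:ℝ)^k * 2 * t := by
          rw [show (1/2:ℝ)^k * 2 * t = (1/2:ℝ)^k * (2*t) by ring]
          exact mul_le_mul_of_nonneg_right
            (sw_pow_half_anti (le_trans (Nat.le_succ k) hn)) (by linarith)
        have h8 : (0:ℝ) ≤ ((2*M+1)*2) * (t * Θ k x) :=
          mul_nonneg (by linarith) (mul_nonneg ht0 (hΘ0 k x))
        linarith [hbound, h7, h8]
      · have hΘk : Θ k x = 1 := hΘone k x (fun hmem => hxK (hKmono (k+1) n hn hmem))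
        have hbound : |h x - W n x| ≤ (2*M+1) * (2*t) := by
          rw [hsplit, hzero1, zero_add, abs_mul]
          have hd : |h x - swClamp M (cc n + bb n x)| ≤ 2*M+1 := by
            calc |h x - swClamp M (cc n + bb n x)|
                ≤ |h x| + |swClamp M (cc n + bb n x)| := abs_sub _ _
              _ ≤ M + (M+1) := add_le_add hhx hTb
              _ = 2*M+1 := by ring
          apply mul_le_mul hd _ (abs_nonneg _) (by linarith)
          rw [abs_of_nonneg hu0]; exact hu2
        have h9 : (2*M+1) * (2*t) = ((2*M+1)*2) * (t * Θ k x) := by rw [hΘk]; ring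
        have h10 : (0:ℝ) ≤ (1/2:ℝ)^k * 2 * t := by positivity
        linarith [hbound]
  -- Conclude: `g` is the strict limit of the `g · ψ(e m)`.
  have hout : ∀ m, (⟨fun x => g x * swPsi (e m x),
      g.continuous.mul (swPsi_cont.comp (e m).continuous)⟩ : C(X, ℝ)) ∈ C :=
    fun m => hstep m _ (fun _ => rfl)
  apply hCcl (fun m => ⟨fun x => g x * swPsi (e m x),
    g.continuous.mul (swPsi_cont.comp (e m).continuous)⟩) g hout
  refine ⟨fun k => ⟨fun x => |g x| * (1 - swPsi (e k x)),
    (g.continuous.abs.mul (continuous_const.sub (swPsi_cont.comp (e k).continuous)))⟩,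
    ?_, ⟨?_, ?_⟩, ?_⟩
  · intro k
    apply hI.2.2.2 _ _ hg
    intro x
    simp only [ContinuousMap.coe_mk]
    rw [abs_mul, abs_abs]
    apply mul_le_of_le_one_right (abs_nonneg _)
    rw [abs_of_nonneg (by linarith [swPsi_le_one (e k x)])]
    linarith [swPsi_nonneg (e k x)]
  · intro k
    rw [ContinuousMap.le_def]
    intro x
    simp only [ContinuousMap.coe_mk]
    have h1 : swPsi (e k x) ≤ swPsi (e (k+1) x) := swPsi_mono (hemono k (k+1) (Nat.le_succ k) x)
    nlinarith [abs_nonneg (g x)]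
  · intro x
    apply sw_isGLB_attained
    · intro k
      simp only [ContinuousMap.coe_mk]
      exact mul_nonneg (abs_nonneg _) (by linarith [swPsi_le_one (e k x)])
    · obtain ⟨m, hm⟩ := hecov x
      refine ⟨m, ?_⟩
      simp only [ContinuousMap.coe_mk]
      rw [swPsi_one (by linarith)]
      ring
  · intro k
    refine ⟨k, fun n hn x => ?_⟩
    simp only [ContinuousMap.coe_mk]
    have h1 : g x - g x * swPsi (e n x) = g x * (1 - swPsi (e n x)) := by ring
    rw [h1, abs_mul]
    have h2 : |1 - swPsi (e n x)| = 1 - swPsi (e n x) :=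
      abs_of_nonneg (by linarith [swPsi_le_one (e n x)])
    rw [h2]
    have h3 : swPsi (e k x) ≤ swPsi (e n x) := swPsi_mono (hemono k n hn x)
    nlinarith [abs_nonneg (g x)]

/-! ### The main membership lemma -/

private lemma sw_main_mem [LocallyCompactSpace X] [T2Space X] [LindelofSpace X]
    {I B C : Set C(X, ℝ)}
    (hI : IsRieszIdeal I) (hBI : B ⊆ I)
    (hBb : ∀ f ∈ B, ∃ M : ℝ, ∀ x, |f x| ≤ M)
    (hzero : (0 : C(X, ℝ)) ∈ B)
    (hadd : ∀ f g : C(X, ℝ), f ∈ B → g ∈ B → f + g ∈ B)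
    (hsmul : ∀ (c : ℝ) (f : C(X, ℝ)), f ∈ B → c • f ∈ B)
    (hmul : ∀ f g : C(X, ℝ), f ∈ B → g ∈ B → f * g ∈ B)
    (hsep : ∀ x y : X, x ≠ y → ∃ s ∈ B, s x ≠ 0 ∧ s y = 0)
    (hnv : ∀ x : X, ∃ s ∈ B, s x ≠ 0)
    (hBC : B ⊆ C) (hCcl : IClosed I C)
    (g : C(X, ℝ)) (hg : g ∈ I) : g ∈ C := by
  classical
  rcases isEmpty_or_nonempty X with hXe | hXne
  · have hg0 : g = 0 := ContinuousMap.ext fun x => (hXe.false x).elim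
    rw [hg0]; exact hBC hzero
  -- countably many covering functions from `B`
  obtain ⟨σ, hσB, hσ0, hσcov⟩ : ∃ σ : ℕ → C(X, ℝ), (∀ i, σ i ∈ B) ∧
      (∀ i x, 0 ≤ σ i x) ∧ ∀ x, ∃ i, 1 < σ i x := by
    choose s hsB hs using hnv
    set σf : X → C(X, ℝ) := fun x => (2/(s x x)^2) • (s x * s x) with hσf
    have hσfval : ∀ x y, σf x y = (2/(s x x)^2) * (s x y * s x y) := fun x y => rfl
    have hcov : (Set.univ : Set X) ⊆ ⋃ x : X, {y | 1 < σf x y} := by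
      intro x _
      apply Set.mem_iUnion.mpr ⟨x, ?_⟩
      show 1 < σf x x
      rw [hσfval]
      have h0 : s x x ≠ 0 := hs x
      have h1 : (0:ℝ) < (s x x)^2 := by positivity
      have h2 : (2:ℝ)/(s x x)^2 * (s x x * s x x) = 2 := by
        rw [pow_two] at h1 ⊢
        rw [div_mul_cancel₀ _ (ne_of_gt h1)]
      rw [h2]; norm_num
    obtain ⟨r, hrc, hrcov⟩ := isLindelof_univ.elim_countable_subcover
      (fun x => {y | 1 < σf x y})
      (fun x => isOpen_lt continuous_const (σf x).continuous) hcov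
    have hrne : r.Nonempty := by
      obtain ⟨x0⟩ := hXne
      have h3 := hrcov (Set.mem_univ x0)
      rw [Set.mem_iUnion₂] at h3
      obtain ⟨i, hi, -⟩ := h3
      exact ⟨i, hi⟩
    obtain ⟨fc, hfc⟩ := hrc.exists_eq_range hrne
    refine ⟨fun n => σf (fc n), fun n => hsmul _ _ (hmul _ _ (hsB _) (hsB _)),
      fun n y => ?_, fun y => ?_⟩
    · rw [hσfval]
      have h0 : s (fc n) (fc n) ≠ 0 := hs (fc n)
      have h1 : (0:ℝ) < (s (fc n) (fc n))^2 := by positivity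
      exact mul_nonneg (by positivity) (mul_self_nonneg _)
    · have h3 := hrcov (Set.mem_univ y)
      rw [Set.mem_iUnion₂] at h3
      obtain ⟨i, hi, hiy⟩ := h3
      rw [hfc] at hi
      obtain ⟨n, rfl⟩ := hi
      exact ⟨n, hiy⟩
  -- a countable cover by compact sets
  obtain ⟨Cs, hCsc, hCscov⟩ : ∃ Cs : ℕ → Set X, (∀ n, IsCompact (Cs n)) ∧
      ∀ y, ∃ n, y ∈ Cs n := by
    choose Kx hKxc hKxn using fun x : X => exists_compact_mem_nhds x
    have hcov : (Set.univ : Set X) ⊆ ⋃ x : X, interior (Kx x) := fun y _ =>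
      Set.mem_iUnion.mpr ⟨y, mem_interior_iff_mem_nhds.mpr (hKxn y)⟩
    obtain ⟨r, hrc, hrcov⟩ := isLindelof_univ.elim_countable_subcover _
      (fun x : X => isOpen_interior) hcov
    have hrne : r.Nonempty := by
      obtain ⟨x0⟩ := hXne
      have h3 := hrcov (Set.mem_univ x0)
      rw [Set.mem_iUnion₂] at h3
      obtain ⟨i, hi, -⟩ := h3
      exact ⟨i, hi⟩
    obtain ⟨fc, hfc⟩ := hrc.exists_eq_range hrne
    refine ⟨fun n => Kx (fc n), fun n => hKxc _, fun y => ?_⟩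
    have h3 := hrcov (Set.mem_univ y)
    rw [Set.mem_iUnion₂] at h3
    obtain ⟨i, hi, hiy⟩ := h3
    rw [hfc] at hi
    obtain ⟨n, rfl⟩ := hi
    exact ⟨n, interior_subset hiy⟩
  -- a compact exhaustion
  let KK : ℕ → {sK : Set X // IsCompact sK} := fun n => Nat.rec
    ⟨Cs 0, hCsc 0⟩
    (fun n prev => ⟨(exists_compact_superset prev.2).choose ∪ Cs (n+1),
      ((exists_compact_superset prev.2).choose_spec.1).union (hCsc (n+1))⟩) n
  set K : ℕ → Set X := fun n => (KK n).1 with hK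
  have hKc : ∀ n, IsCompact (K n) := fun n => (KK n).2
  have hKsub : ∀ n, K n ⊆ interior (K (n+1)) := by
    intro n
    have h1 : K (n+1) = (exists_compact_superset (KK n).2).choose ∪ Cs (n+1) := rfl
    rw [h1]
    exact ((exists_compact_superset (KK n).2).choose_spec.2).trans
      (interior_mono Set.subset_union_left)
  have hKmono : ∀ m n, m ≤ n → K m ⊆ K n := by
    intro m n hmn
    induction n, hmn using Nat.le_induction with
    | base => exact subset_rfl
    | succ n hmn ih => exact ih.trans ((hKsub n).trans interior_subset)
  have hKcov : ∀ x, ∃ n, x ∈ K n := by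
    intro x
    obtain ⟨n, hn⟩ := hCscov x
    refine ⟨n, ?_⟩
    cases n with
    | zero => exact hn
    | succ n =>
      show x ∈ (exists_compact_superset (KK n).2).choose ∪ Cs (n+1)
      exact Set.mem_union_right _ hn
  -- Urysohn functions
  have hθex : ∀ n, ∃ θ : C(X, ℝ), Set.EqOn θ 0 (K n) ∧ Set.EqOn θ 1 (interior (K (n+1)))ᶜ ∧
      ∀ x, θ x ∈ Set.Icc (0:ℝ) 1 :=
    fun n => exists_continuous_zero_one_of_isCompact (hKc n) isOpen_interior.isClosed_compl
      (Set.disjoint_left.mpr fun x hx hxc => hxc (hKsub n hx))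
  choose θ hθ0 hθ1 hθ01 using hθex
  have hθ0' : ∀ n x, x ∈ K n → θ n x = 0 := fun n x hx => by simpa using hθ0 n hx
  have hθ1' : ∀ n x, x ∉ interior (K (n+1)) → θ n x = 1 := fun n x hx => by simpa using hθ1 n hx
  let ΘΘ : ℕ → C(X, ℝ) := fun k => Nat.rec (θ 0)
    (fun k prev => ⟨fun x => min (prev x) (θ (k+1) x),
      prev.continuous.min (θ (k+1)).continuous⟩) k
  have hΘS : ∀ k x, ΘΘ (k+1) x = min (ΘΘ k x) (θ (k+1) x) := fun k x => rfl
  have hΘ01 : ∀ k x, 0 ≤ ΘΘ k x ∧ ΘΘ k x ≤ 1 := by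
    intro k; induction k with
    | zero => intro x; exact ⟨(hθ01 0 x).1, (hθ01 0 x).2⟩
    | succ k ih =>
      intro x
      rw [hΘS]
      exact ⟨le_min (ih x).1 (hθ01 (k+1) x).1, (min_le_left _ _).trans (ih x).2⟩
  have hΘdec : ∀ k x, ΘΘ (k+1) x ≤ ΘΘ k x := fun k x => by
    rw [hΘS]; exact min_le_left _ _
  have hΘzero : ∀ k x, x ∈ K k → ΘΘ k x = 0 := by
    intro k; induction k with
    | zero => intro x hx; exact hθ0' 0 x hx
    | succ k ih =>
      intro x hx
      rw [hΘS, hθ0' (k+1) x hx]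
      exact min_eq_right (hΘ01 k x).1
  have hΘone : ∀ k x, x ∉ K (k+1) → ΘΘ k x = 1 := by
    intro k; induction k with
    | zero =>
      intro x hx
      exact hθ1' 0 x (fun hc => hx (interior_subset hc))
    | succ k ih =>
      intro x hx
      have hx' : x ∉ K (k+1) := fun hc => hx (hKmono (k+1) (k+2) (by omega) hc)
      rw [hΘS, ih x hx', hθ1' (k+1) x (fun hc => hx (interior_subset hc))]
      norm_num
  -- bounded elements of `I` are in `C`
  have hbdd : ∀ (h : C(X, ℝ)) (Mh : ℝ), h ∈ I → 0 ≤ Mh → (∀ x, |h x| ≤ Mh) → h ∈ C :=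
    fun h Mh hh h0 hMh => sw_bounded_main hI hBI hBb hzero hadd hsmul hmul hsep hBC hCcl
      σ hσB hσ0 hσcov K hKc hKmono hKcov ΘΘ (fun k x => (hΘ01 k x).1) (fun k x => (hΘ01 k x).2)
      hΘdec hΘone hΘzero h hh Mh h0 hMh
  -- truncations of `g`
  set tr : ℕ → C(X, ℝ) := fun n => ⟨fun x => max (min (g x) (n:ℝ)) (-(n:ℝ)),
    Continuous.max (g.continuous.min continuous_const) continuous_const⟩ with htr
  have htrC : ∀ n, tr n ∈ C := by
    intro n
    apply hbdd (tr n) n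
    · exact hI.2.2.2 _ _ hg (fun x => sw_clamp_abs_le_abs (Nat.cast_nonneg n))
    · exact Nat.cast_nonneg n
    · intro x; exact sw_clamp_abs (Nat.cast_nonneg n)
  apply hCcl tr g htrC
  refine ⟨fun k => ⟨fun x => max (|g x| - (k:ℝ)) 0,
    Continuous.max ((continuous_abs.comp g.continuous).sub continuous_const) continuous_const⟩,
    ?_, ⟨?_, ?_⟩, ?_⟩
  · intro k
    apply hI.2.2.2 _ _ hg
    intro x
    simp only [ContinuousMap.coe_mk]
    rw [abs_of_nonneg (le_max_right _ _)]
    exact max_le (sub_le_self _ (Nat.cast_nonneg k)) (abs_nonneg _)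
  · intro k
    rw [ContinuousMap.le_def]
    intro x
    simp only [ContinuousMap.coe_mk]
    apply max_le_max _ le_rfl
    have h1 : ((k:ℝ)) ≤ ((k+1:ℕ):ℝ) := by exact_mod_cast Nat.le_succ k
    linarith
  · intro x
    apply sw_isGLB_attained
    · intro k
      exact le_max_right _ _
    · refine ⟨⌈|g x|⌉₊, ?_⟩
      simp only [ContinuousMap.coe_mk]
      rw [max_eq_right]
      linarith [Nat.le_ceil |g x|]
  · intro k
    refine ⟨k, fun n hn x => ?_⟩
    simp only [ContinuousMap.coe_mk]
    calc |g x - max (min (g x) (n:ℝ)) (-(n:ℝ))| ≤ max (|g x| - (n:ℝ)) 0 :=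
        sw_clamp_dist (Nat.cast_nonneg n)
      _ ≤ max (|g x| - (k:ℝ)) 0 := by
          apply max_le_max _ le_rfl
          have h1 : ((k:ℝ)) ≤ (n:ℝ) := Nat.cast_le.mpr hn
          linarith

/-! ### `I` itself is `I`-closed -/

private lemma sw_iclosed_self {I : Set C(X, ℝ)} (hI : IsRieszIdeal I) : IClosed I I := by
  intro gs g' hgs hconv
  obtain ⟨f, hfI, hfd, hfc⟩ := hconv
  obtain ⟨N, hN⟩ := hfc 0
  have h1 : (⟨fun x => |gs N x|, (map_continuous (gs N)).abs⟩ : C(X, ℝ)) ∈ I :=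
    hI.2.2.2 _ _ (hgs N) (fun x => by simp [abs_abs])
  apply hI.2.2.2 g' ((⟨fun x => |gs N x|, (map_continuous (gs N)).abs⟩ : C(X, ℝ)) + f 0)
    (hI.2.1 _ _ h1 (hfI 0))
  intro x
  have h2 := hN N le_rfl x
  have h3 : 0 ≤ f 0 x := (hfd.2 x).1 ⟨0, rfl⟩
  simp only [ContinuousMap.add_apply, ContinuousMap.coe_mk]
  have h4 : |g' x| ≤ |gs N x| + |g' x - gs N x| := by
    calc |g' x| = |gs N x + (g' x - gs N x)| := by ring_nf
      _ ≤ |gs N x| + |g' x - gs N x| := abs_add_le _ _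
  rw [abs_of_nonneg (by positivity : (0:ℝ) ≤ |gs N x| + f 0 x)]
  linarith

theorem stone_weierstrass_algebraic
    (X : Type*) [TopologicalSpace X] [LocallyCompactSpace X] [T2Space X] [LindelofSpace X]
    (I : Set C(X, ℝ)) (hI : IsRieszIdeal I)
    (B : Set C(X, ℝ)) (hBI : B ⊆ I)
    (hBb : ∀ f ∈ B, ∃ M : ℝ, ∀ x, |f x| ≤ M)
    (hzero : (0 : C(X, ℝ)) ∈ B)
    (hadd : ∀ f g : C(X, ℝ), f ∈ B → g ∈ B → f + g ∈ B)
    (hsmul : ∀ (c : ℝ) (f : C(X, ℝ)), f ∈ B → c • f ∈ B)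
    (hmul : ∀ f g : C(X, ℝ), f ∈ B → g ∈ B → f * g ∈ B)
    (hsep : ∀ x y : X, x ≠ y → ∃ s ∈ B, s x ≠ 0 ∧ s y = 0)
    (hnv : ∀ x : X, ∃ s ∈ B, s x ≠ 0) :
    IClosure I B = I := by
  apply Set.Subset.antisymm
  · intro f hf
    exact hf I ⟨Set.Subset.rfl, hBI, sw_iclosed_self hI⟩
  · intro g hg
    intro C hC
    exact sw_main_mem hI hBI hBb hzero hadd hsmul hmul hsep hnv hC.2.1 hC.2.2 g hg
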